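/- arXiv:1904.11065 — 3 statements merged into one kernel-verified Lean document; each statement's English description precedes it below -/
import Mathlib

section
/- Let Ṽ be a finite-dimensional complex normed space with d := dim_ℂ Ṽ ≥ 1, let g be a map assigning to each X ∈ ℝ^N a positive-definite quadratic form g_X on ℝ^N, and let M : ℝ^N → ℝ be a positive function. If a smooth map a : ℝ^N → 𝓛(Ṽ) satisfies the S(M,g)-estimates, then the scalar-valued map X ↦ det(a(X)) is smooth and satisfies the S(M^d, g)-estimates, i.e. for every l ∈ ℕ there exists C'_l > 0 such that |(det∘a)^{(l)}(X)[T₁,…,T_l]| ≤ C'_l · M(X)^d · ∏_{j=1}^l g_X(T_j)^{1/2} for all X, T₁,…,T_l ∈ ℝ^N. -/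
set_option maxHeartbeats 1000000

open Finset

/-- A smooth map `a : ℝ^N → F` satisfies the `S(M,g)`-estimates if for every `l ∈ ℕ`
there is `C_l > 0` bounding the `l`-th iterated Fréchet derivative by
`C_l · M(X) · ∏_j g_X(T_j)^{1/2}`. -/
def SEstimates {F : Type*} [NormedAddCommGroup F] [NormedSpace ℝ F] (N : ℕ)
    (g : EuclideanSpace ℝ (Fin N) → QuadraticForm ℝ (EuclideanSpace ℝ (Fin N)))
    (M : EuclideanSpace ℝ (Fin N) → ℝ) (a : EuclideanSpace ℝ (Fin N) → F) : Prop :=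
  ∀ l : ℕ, ∃ C : ℝ, 0 < C ∧ ∀ (X : EuclideanSpace ℝ (Fin N))
    (T : Fin l → EuclideanSpace ℝ (Fin N)),
      ‖iteratedFDeriv ℝ l a X T‖ ≤ C * M X * ∏ j, Real.sqrt (g X (T j))

section Main

variable {Vt : Type*} [NormedAddCommGroup Vt] [NormedSpace ℂ Vt] [FiniteDimensional ℂ Vt]

noncomputable def entryCLM (p q : Fin (Module.finrank ℂ Vt)) :
    (Vt →L[ℂ] Vt) →L[ℝ] ℂ :=
  (LinearMap.toContinuousLinearMap
    ((LinearMap.proj q) ∘ₗ (LinearMap.proj p) ∘ₗ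
      (LinearMap.toMatrix (Module.finBasis ℂ Vt) (Module.finBasis ℂ Vt)).toLinearMap ∘ₗ
      (ContinuousLinearMap.coeLM ℂ))).restrictScalars ℝ

lemma det_eq_sum (A : Vt →L[ℂ] Vt) :
    LinearMap.det (A : Vt →ₗ[ℂ] Vt) =
      ∑ σ : Equiv.Perm (Fin (Module.finrank ℂ Vt)),
        ((Equiv.Perm.sign σ : ℤ) : ℂ) • ∏ i, entryCLM (σ i) i A := by
  rw [← LinearMap.det_toMatrix (Module.finBasis ℂ Vt), Matrix.det_apply]
  refine Finset.sum_congr rfl fun σ _ => ?_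
  rw [Units.smul_def, zsmul_eq_mul, smul_eq_mul]
  rfl

lemma exists_orthonormalizing (N : ℕ) (Q : QuadraticForm ℝ (EuclideanSpace ℝ (Fin N)))
    (hQ : Q.PosDef) :
    ∃ L : EuclideanSpace ℝ (Fin N) ≃L[ℝ] EuclideanSpace ℝ (Fin N),
      ∀ T, Real.sqrt (Q (L T)) = ‖T‖ := by
  obtain ⟨v, hv⟩ := LinearMap.BilinForm.exists_orthogonal_basis
    (QuadraticForm.associated_isSymm ℝ Q)
  have hrank : Module.finrank ℝ (EuclideanSpace ℝ (Fin N)) = N := finrank_euclideanSpace_fin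
  set e : Fin (Module.finrank ℝ (EuclideanSpace ℝ (Fin N))) ≃ Fin N := finCongr hrank
  have hpos : ∀ i, 0 < Q (v i) := fun i => hQ _ (v.ne_zero i)
  set s : Fin (Module.finrank ℝ (EuclideanSpace ℝ (Fin N))) → ℝˣ :=
    fun i => Units.mk0 ((Real.sqrt (Q (v i)))⁻¹)
      (by have := hpos i; positivity) with hs
  set w : Module.Basis (Fin N) ℝ (EuclideanSpace ℝ (Fin N)) := (v.unitsSMul s).reindex e with hw
  have hwapp : ∀ j, w j = ((Real.sqrt (Q (v (e.symm j))))⁻¹ : ℝ) • v (e.symm j) := by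
    intro j
    simp only [hw, Module.Basis.reindex_apply, Module.Basis.unitsSMul_apply, hs, Units.smul_def,
      Units.val_mk0]
  have hworth : (QuadraticMap.associated (R := ℝ) Q).IsOrthoᵢ w := by
    intro i j hij
    have hne : e.symm i ≠ e.symm j := fun h => hij (by simpa using congrArg e h)
    show (QuadraticMap.associated (R := ℝ) Q) (w i) (w j) = 0
    rw [hwapp, hwapp, LinearMap.map_smul₂, LinearMap.map_smul, hv hne]
    simp
  have hwone : ∀ j, Q (w j) = 1 := by
    intro j
    rw [hwapp, QuadraticMap.map_smul]
    have h := hpos (e.symm j)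
    rw [smul_eq_mul, ← Real.sqrt_inv, Real.mul_self_sqrt (by positivity)]
    field_simp
  set b₀ : Module.Basis (Fin N) ℝ (EuclideanSpace ℝ (Fin N)) := PiLp.basisFun 2 ℝ (Fin N) with hb₀
  set L : EuclideanSpace ℝ (Fin N) ≃ₗ[ℝ] EuclideanSpace ℝ (Fin N) := b₀.equiv w (Equiv.refl _)
    with hL
  refine ⟨L.toContinuousLinearEquiv, fun T => ?_⟩
  have hLT : L T = ∑ j, T j • w j := by
    have hT : T = ∑ j, T j • b₀ j := by
      conv_lhs => rw [← Module.Basis.sum_repr b₀ T]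
      refine Finset.sum_congr rfl fun j _ => ?_
      rw [hb₀, PiLp.basisFun_repr]
    conv_lhs => rw [hT]
    rw [map_sum]
    refine Finset.sum_congr rfl fun j _ => ?_
    rw [LinearEquiv.map_smul, hL, Module.Basis.equiv_apply, Equiv.refl_apply]
  have hQL : Q (L T) = ∑ j, (T j) * (T j) := by
    rw [hLT, ← QuadraticMap.basisRepr_apply (v := w) Q (fun j => T j),
      QuadraticMap.basisRepr_eq_of_iIsOrtho _ _ hworth]
    simp [hwone]
  rw [show ((L.toContinuousLinearEquiv : EuclideanSpace ℝ (Fin N) ≃L[ℝ] _) T) = L T from rfl,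
    hQL]
  rw [EuclideanSpace.norm_eq]
  congr 1
  refine Finset.sum_congr rfl fun j _ => ?_
  rw [Real.norm_eq_abs, sq_abs, sq]

-- the core estimate
lemma det_estimate_core
    (hd : 1 ≤ Module.finrank ℂ Vt)
    (N : ℕ) (hN : 1 ≤ N)
    (g : EuclideanSpace ℝ (Fin N) → QuadraticForm ℝ (EuclideanSpace ℝ (Fin N)))
    (hg : ∀ X, (g X).PosDef)
    (M : EuclideanSpace ℝ (Fin N) → ℝ) (hM : ∀ X, 0 < M X)
    (a : EuclideanSpace ℝ (Fin N) → (Vt →L[ℂ] Vt))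
    (ha_smooth : ContDiff ℝ (⊤ : ℕ∞) a)
    (C : ℕ → ℝ) (hCpos : ∀ l, 0 < C l)
    (hC : ∀ l (X : EuclideanSpace ℝ (Fin N)) (T : Fin l → EuclideanSpace ℝ (Fin N)),
      ‖iteratedFDeriv ℝ l a X T‖ ≤ C l * M X * ∏ j, Real.sqrt (g X (T j)))
    (hdet_smooth : ContDiff ℝ (⊤ : ℕ∞) (fun X => LinearMap.det (a X : Vt →ₗ[ℂ] Vt)))
    (l : ℕ) :
    ∃ C' : ℝ, 0 < C' ∧ ∀ (X : EuclideanSpace ℝ (Fin N))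
      (T : Fin l → EuclideanSpace ℝ (Fin N)),
      ‖iteratedFDeriv ℝ l (fun X => LinearMap.det (a X : Vt →ₗ[ℂ] Vt)) X T‖ ≤
        C' * (M X) ^ (Module.finrank ℂ Vt) * ∏ j, Real.sqrt (g X (T j)) := by
  classical
  set d := Module.finrank ℂ Vt with hdd
  set Φ : ℝ := ∑ p : Fin d, ∑ q : Fin d, ‖entryCLM (Vt := Vt) p q‖ with hΦ
  have hΦ0 : 0 ≤ Φ := Finset.sum_nonneg fun _ _ => Finset.sum_nonneg fun _ _ => ContinuousLinearMap.opNorm_nonneg _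
  have hφle : ∀ p q : Fin d, ‖entryCLM (Vt := Vt) p q‖ ≤ Φ := by
    intro p q
    calc ‖entryCLM (Vt := Vt) p q‖ ≤ ∑ q' : Fin d, ‖entryCLM (Vt := Vt) p q'‖ :=
          Finset.single_le_sum (fun _ _ => ContinuousLinearMap.opNorm_nonneg _) (Finset.mem_univ q)
      _ ≤ Φ := Finset.single_le_sum
          (fun (p' : Fin d) _ => Finset.sum_nonneg fun _ _ => ContinuousLinearMap.opNorm_nonneg _) (Finset.mem_univ p)
  set A : ℝ := (1 + Φ) * (∑ i ∈ Finset.range (l+1), C i) with hA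
  have hCsum : 0 < ∑ i ∈ Finset.range (l+1), C i :=
    Finset.sum_pos (fun i _ => hCpos i) (by simp)
  have hA0 : 0 < A := by positivity
  have hkey : ∀ i, i ≤ l → ∀ p q : Fin d, ‖entryCLM (Vt := Vt) p q‖ * C i ≤ A := by
    intro i hi p q
    have h1 : C i ≤ ∑ i ∈ Finset.range (l+1), C i :=
      Finset.single_le_sum (fun i _ => (hCpos i).le) (Finset.mem_range.2 (Nat.lt_succ_of_le hi))
    have h2 : ‖entryCLM (Vt := Vt) p q‖ ≤ 1 + Φ := (hφle p q).trans (by linarith)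
    calc ‖entryCLM (Vt := Vt) p q‖ * C i ≤ (1 + Φ) * (∑ i ∈ Finset.range (l+1), C i) :=
      mul_le_mul h2 h1 (hCpos i).le (by linarith)
      _ = A := rfl
  set B : ℝ := ∑ p ∈ (Finset.univ : Finset (Fin d)).sym l,
    ((p : Multiset (Fin d)).countPerms : ℝ) with hB
  have hB0 : 0 ≤ B := Finset.sum_nonneg fun _ _ => Nat.cast_nonneg _
  refine ⟨(Fintype.card (Equiv.Perm (Fin d)) : ℝ) * B * A ^ d + 1, ?_, ?_⟩
  · have : (0:ℝ) < Fintype.card (Equiv.Perm (Fin d)) := by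
      exact_mod_cast Fintype.card_pos
    positivity
  intro X₀ T
  obtain ⟨L, hL⟩ := exists_orthonormalizing N (g X₀) (hg X₀)
  set Y₀ := L.symm X₀ with hY₀
  have hLY₀ : L Y₀ = X₀ := L.apply_symm_apply X₀
  have haL : ContDiff ℝ (⊤ : ℕ∞) (a ∘ (L : EuclideanSpace ℝ (Fin N) →L[ℝ] EuclideanSpace ℝ (Fin N))) :=
    ha_smooth.comp (L : EuclideanSpace ℝ (Fin N) →L[ℝ] EuclideanSpace ℝ (Fin N)).contDiff
  have hMpos := hM X₀
  -- step 1
  have h1 : ∀ i, i ≤ l → ‖iteratedFDeriv ℝ i (a ∘ (L : EuclideanSpace ℝ (Fin N) →L[ℝ] EuclideanSpace ℝ (Fin N))) Y₀‖ ≤ C i * M X₀ := by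
    intro i hi
    rw [(L : EuclideanSpace ℝ (Fin N) →L[ℝ] EuclideanSpace ℝ (Fin N)).iteratedFDeriv_comp_right ha_smooth Y₀ ((by exact_mod_cast le_top))]
    refine ContinuousMultilinearMap.opNorm_le_bound (mul_nonneg (hCpos i).le hMpos.le) fun m => ?_
    rw [ContinuousMultilinearMap.compContinuousLinearMap_apply]
    have := hC i ((L : EuclideanSpace ℝ (Fin N) →L[ℝ] EuclideanSpace ℝ (Fin N)) Y₀) (fun j => (L : EuclideanSpace ℝ (Fin N) →L[ℝ] EuclideanSpace ℝ (Fin N)) (m j))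
    refine this.trans (le_of_eq ?_)
    have hco : (L : EuclideanSpace ℝ (Fin N) →L[ℝ] EuclideanSpace ℝ (Fin N)) Y₀ = X₀ := hLY₀
    rw [hco]
    congr 1
    exact Finset.prod_congr rfl fun j _ => hL (m j)
  -- step 2
  have h2 : ∀ (p q : Fin d) i, i ≤ l →
      ‖iteratedFDeriv ℝ i (fun Y => entryCLM p q (a ((L : EuclideanSpace ℝ (Fin N) →L[ℝ] EuclideanSpace ℝ (Fin N)) Y))) Y₀‖ ≤ A * M X₀ := by
    intro p q i hi
    have hfc : (fun Y => entryCLM p q (a ((L : EuclideanSpace ℝ (Fin N) →L[ℝ] EuclideanSpace ℝ (Fin N)) Y))) =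
        (entryCLM p q) ∘ (a ∘ (L : EuclideanSpace ℝ (Fin N) →L[ℝ] EuclideanSpace ℝ (Fin N))) := rfl
    rw [hfc, (entryCLM p q).iteratedFDeriv_comp_left haL.contDiffAt (i := i) (by exact_mod_cast le_top)]
    calc ‖(entryCLM p q).compContinuousMultilinearMap
          (iteratedFDeriv ℝ i (a ∘ (L : EuclideanSpace ℝ (Fin N) →L[ℝ] EuclideanSpace ℝ (Fin N))) Y₀)‖
        ≤ ‖entryCLM (Vt := Vt) p q‖ * ‖iteratedFDeriv ℝ i (a ∘ (L : EuclideanSpace ℝ (Fin N) →L[ℝ] EuclideanSpace ℝ (Fin N))) Y₀‖ :=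
          ContinuousLinearMap.norm_compContinuousMultilinearMap_le _ _
      _ ≤ ‖entryCLM (Vt := Vt) p q‖ * (C i * M X₀) :=
          mul_le_mul_of_nonneg_left (h1 i hi) (ContinuousLinearMap.opNorm_nonneg _)
      _ = (‖entryCLM (Vt := Vt) p q‖ * C i) * M X₀ := by ring
      _ ≤ A * M X₀ := mul_le_mul_of_nonneg_right (hkey i hi p q) hMpos.le
  -- step 3
  have h3 : ∀ σ : Equiv.Perm (Fin d),
      ‖iteratedFDeriv ℝ l (fun Y => ∏ i, entryCLM (σ i) i (a ((L : EuclideanSpace ℝ (Fin N) →L[ℝ] EuclideanSpace ℝ (Fin N)) Y))) Y₀‖ ≤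
        B * (A ^ d * (M X₀) ^ d) := by
    intro σ
    have hsm : ∀ i : Fin d, i ∈ (Finset.univ : Finset (Fin d)) →
        ContDiff ℝ (⊤ : ℕ∞) (fun Y => entryCLM (σ i) i (a ((L : EuclideanSpace ℝ (Fin N) →L[ℝ] EuclideanSpace ℝ (Fin N)) Y))) :=
      fun i _ => ((entryCLM (σ i) i).contDiff).comp haL
    refine le_trans (norm_iteratedFDeriv_prod_le hsm (by exact_mod_cast le_top)) ?_
    rw [hB, Finset.sum_mul]
    refine Finset.sum_le_sum fun p hp => ?_
    rw [← mul_pow]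
    refine mul_le_mul_of_nonneg_left ?_ (Nat.cast_nonneg (α := ℝ) _)
    have hcard : (p : Multiset (Fin d)).card = l := p.2
    calc ∏ j : Fin d, ‖iteratedFDeriv ℝ ((p : Multiset (Fin d)).count j)
            (fun Y => entryCLM (σ j) j (a ((L : EuclideanSpace ℝ (Fin N) →L[ℝ] EuclideanSpace ℝ (Fin N)) Y))) Y₀‖
        ≤ ∏ _j : Fin d, (A * M X₀) := by
          refine Finset.prod_le_prod (fun _ _ => norm_nonneg _) fun j _ => ?_
          exact h2 (σ j) j _ (le_trans (Multiset.count_le_card _ _) (le_of_eq hcard))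
      _ = (A * M X₀) ^ d := by rw [Finset.prod_const, Finset.card_univ, Fintype.card_fin]
  -- step 4
  have h4 : ‖iteratedFDeriv ℝ l
      ((fun X => LinearMap.det (a X : Vt →ₗ[ℂ] Vt)) ∘ (L : EuclideanSpace ℝ (Fin N) →L[ℝ] EuclideanSpace ℝ (Fin N))) Y₀‖ ≤
      (Fintype.card (Equiv.Perm (Fin d)) : ℝ) * B * (A ^ d * (M X₀) ^ d) := by
    have hcomp : ((fun X => LinearMap.det (a X : Vt →ₗ[ℂ] Vt)) ∘ (L : EuclideanSpace ℝ (Fin N) →L[ℝ] EuclideanSpace ℝ (Fin N))) =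
        (fun Y => ∑ σ : Equiv.Perm (Fin d),
          ((Equiv.Perm.sign σ : ℤ) : ℂ) •
            ∏ i, entryCLM (σ i) i (a ((L : EuclideanSpace ℝ (Fin N) →L[ℝ] EuclideanSpace ℝ (Fin N)) Y))) := by
      funext Y; exact det_eq_sum _
    rw [hcomp]
    have hsm : ∀ σ : Equiv.Perm (Fin d), ContDiff ℝ (l : WithTop ℕ∞)
        (fun Y => ((Equiv.Perm.sign σ : ℤ) : ℂ) •
          ∏ i, entryCLM (σ i) i (a ((L : EuclideanSpace ℝ (Fin N) →L[ℝ] EuclideanSpace ℝ (Fin N)) Y))) := by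
      intro σ
      refine ContDiff.const_smul _ ?_
      exact (contDiff_prod fun i _ => ((entryCLM (σ i) i).contDiff).comp haL).of_le (by exact_mod_cast le_top)
    have hsum := iteratedFDeriv_sum (𝕜 := ℝ)
      (f := fun σ : Equiv.Perm (Fin d) => fun Y =>
        ((Equiv.Perm.sign σ : ℤ) : ℂ) • ∏ i, entryCLM (σ i) i (a ((L : EuclideanSpace ℝ (Fin N) →L[ℝ] EuclideanSpace ℝ (Fin N)) Y)))
      (u := Finset.univ) (i := l) (fun σ _ => hsm σ)
    have hsum' := congrFun hsum Y₀
    simp only [Finset.sum_apply] at hsum'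
    rw [hsum']
    refine le_trans (norm_sum_le _ _) ?_
    have hterm : ∀ σ : Equiv.Perm (Fin d),
        ‖iteratedFDeriv ℝ l (fun Y => ((Equiv.Perm.sign σ : ℤ) : ℂ) •
          ∏ i, entryCLM (σ i) i (a ((L : EuclideanSpace ℝ (Fin N) →L[ℝ] EuclideanSpace ℝ (Fin N)) Y))) Y₀‖ ≤ B * (A ^ d * (M X₀) ^ d) := by
      intro σ
      have hP : ContDiff ℝ (l : WithTop ℕ∞)
          (fun Y => ∏ i : Fin d, entryCLM (σ i) i
            (a ((L : EuclideanSpace ℝ (Fin N) →L[ℝ] EuclideanSpace ℝ (Fin N)) Y))) :=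
        (contDiff_prod fun i _ => ((entryCLM (σ i) i).contDiff).comp haL).of_le (by exact_mod_cast le_top)
      rw [iteratedFDeriv_const_smul_apply' hP.contDiffAt]
      rw [norm_smul]
      have hsign : ‖((Equiv.Perm.sign σ : ℤ) : ℂ)‖ = 1 := by
        rcases Int.units_eq_one_or (Equiv.Perm.sign σ) with h | h <;> rw [h] <;> simp
      rw [hsign, one_mul]
      exact h3 σ
    calc ∑ σ : Equiv.Perm (Fin d), ‖iteratedFDeriv ℝ l
            (fun Y => ((Equiv.Perm.sign σ : ℤ) : ℂ) •
              ∏ i, entryCLM (σ i) i (a ((L : EuclideanSpace ℝ (Fin N) →L[ℝ] EuclideanSpace ℝ (Fin N)) Y))) Y₀‖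
        ≤ ∑ _σ : Equiv.Perm (Fin d), B * (A ^ d * (M X₀) ^ d) :=
          Finset.sum_le_sum fun σ _ => hterm σ
      _ = (Fintype.card (Equiv.Perm (Fin d)) : ℝ) * B * (A ^ d * (M X₀) ^ d) := by
          rw [Finset.sum_const, Finset.card_univ, nsmul_eq_mul, mul_assoc]
  -- step 5 : assemble
  have hcr := (L : EuclideanSpace ℝ (Fin N) →L[ℝ] EuclideanSpace ℝ (Fin N)).iteratedFDeriv_comp_right
    (f := fun X => LinearMap.det (a X : Vt →ₗ[ℂ] Vt)) hdet_smooth Y₀ (i := l) (by exact_mod_cast le_top)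
  have happ : iteratedFDeriv ℝ l (fun X => LinearMap.det (a X : Vt →ₗ[ℂ] Vt)) X₀ T =
      iteratedFDeriv ℝ l ((fun X => LinearMap.det (a X : Vt →ₗ[ℂ] Vt)) ∘ (L : EuclideanSpace ℝ (Fin N) →L[ℝ] EuclideanSpace ℝ (Fin N))) Y₀
        (fun j => L.symm (T j)) := by
    rw [hcr, ContinuousMultilinearMap.compContinuousLinearMap_apply]
    have hco : (L : EuclideanSpace ℝ (Fin N) →L[ℝ] EuclideanSpace ℝ (Fin N)) Y₀ = X₀ := hLY₀
    rw [hco]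
    congr 1
    funext j
    exact (L.apply_symm_apply (T j)).symm
  rw [happ]
  have hprod : ∏ j, ‖L.symm (T j)‖ = ∏ j, Real.sqrt (g X₀ (T j)) := by
    refine Finset.prod_congr rfl fun j _ => ?_
    rw [← hL (L.symm (T j)), L.apply_symm_apply]
  calc ‖iteratedFDeriv ℝ l ((fun X => LinearMap.det (a X : Vt →ₗ[ℂ] Vt)) ∘ (L : EuclideanSpace ℝ (Fin N) →L[ℝ] EuclideanSpace ℝ (Fin N))) Y₀
          (fun j => L.symm (T j))‖
      ≤ ‖iteratedFDeriv ℝ l ((fun X => LinearMap.det (a X : Vt →ₗ[ℂ] Vt)) ∘ (L : EuclideanSpace ℝ (Fin N) →L[ℝ] EuclideanSpace ℝ (Fin N))) Y₀‖ *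
          ∏ j, ‖L.symm (T j)‖ := ContinuousMultilinearMap.le_opNorm _ _
    _ ≤ ((Fintype.card (Equiv.Perm (Fin d)) : ℝ) * B * (A ^ d * (M X₀) ^ d)) *
          ∏ j, Real.sqrt (g X₀ (T j)) := by
        rw [hprod]
        exact mul_le_mul_of_nonneg_right h4
          (Finset.prod_nonneg fun j _ => Real.sqrt_nonneg _)
    _ ≤ ((Fintype.card (Equiv.Perm (Fin d)) : ℝ) * B * A ^ d + 1) * (M X₀) ^ d *
          ∏ j, Real.sqrt (g X₀ (T j)) := by
        refine mul_le_mul_of_nonneg_right ?_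
          (Finset.prod_nonneg fun j _ => Real.sqrt_nonneg _)
        have : (0:ℝ) ≤ (M X₀) ^ d := by positivity
        nlinarith [Fintype.card_pos (α := Equiv.Perm (Fin d))]

end Main

/-- If `a ∈ S(M,g; 𝓛(Ṽ))` then `det ∘ a` is smooth and lies in `S(M^d, g)` where
`d = dim_ℂ Ṽ`. -/
theorem det_symbol_SEstimates
    (Vt : Type*) [NormedAddCommGroup Vt] [NormedSpace ℂ Vt] [FiniteDimensional ℂ Vt]
    (hd : 1 ≤ Module.finrank ℂ Vt)
    (N : ℕ) (hN : 1 ≤ N)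
    (g : EuclideanSpace ℝ (Fin N) → QuadraticForm ℝ (EuclideanSpace ℝ (Fin N)))
    (hg : ∀ X, (g X).PosDef)
    (M : EuclideanSpace ℝ (Fin N) → ℝ) (hM : ∀ X, 0 < M X)
    (a : EuclideanSpace ℝ (Fin N) → (Vt →L[ℂ] Vt))
    (ha_smooth : ContDiff ℝ (⊤ : ℕ∞) a)
    (ha : SEstimates N g M a) :
    ContDiff ℝ (⊤ : ℕ∞) (fun X => LinearMap.det (a X : Vt →ₗ[ℂ] Vt)) ∧
      SEstimates N g (fun X => (M X) ^ (Module.finrank ℂ Vt))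
        (fun X => LinearMap.det (a X : Vt →ₗ[ℂ] Vt)) := by
  have hdet_smooth : ContDiff ℝ (⊤ : ℕ∞) (fun X => LinearMap.det (a X : Vt →ₗ[ℂ] Vt)) := by
    have hrepr : (fun X => LinearMap.det (a X : Vt →ₗ[ℂ] Vt)) =
        (fun X => ∑ σ : Equiv.Perm (Fin (Module.finrank ℂ Vt)),
          ((Equiv.Perm.sign σ : ℤ) : ℂ) • ∏ i, entryCLM (σ i) i (a X)) := by
      funext X; exact det_eq_sum (a X)
    rw [hrepr]
    refine ContDiff.sum fun σ _ => ContDiff.const_smul _ ?_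
    exact contDiff_prod fun i _ => ((entryCLM (σ i) i).contDiff).comp ha_smooth
  refine ⟨hdet_smooth, ?_⟩
  choose C hCpos hC using ha
  intro l
  obtain ⟨C', hC'pos, hC'⟩ := det_estimate_core hd N hN g hg M hM a ha_smooth C hCpos hC
    hdet_smooth l
  exact ⟨C', hC'pos, hC'⟩
end

section
/- Let H be a complex Hilbert space and let T : H → H be a bounded self-adjoint operator which is positive (⟨Tu, u⟩ ≥ 0 for all u ∈ H). Let r > 0 and assume that the spectrum of T contains no point z with 0 < |z| ≤ r. Then the operator B := (2πi)⁻¹ · ∮_{|λ| = r} (λ·Id − T)⁻¹ dλ, where the integral is the circle integral over the counterclockwise-oriented circle of radius r centered at 0 of the resolvent λ ↦ (λ·Id − T)⁻¹ (which exists in the algebra of bounded operators for every λ on this circle), equals the orthogonal projection of H onto the closed subspace ker T. -/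
/-!
Under the continuous functional calculus the resolvent `(λ - T)⁻¹` is the image of
`z ↦ (λ - z)⁻¹`, and the calculus commutes with the contour integral, so `B` is the image of
`z ↦ (2πi)⁻¹ ∮ (λ - z)⁻¹ dλ`, the indicator `χ` of the open disc of radius `r`. On the spectrum
of `T` this is the indicator of `{0}`: hence `B` is self-adjoint, `T B = 0`, and `B` fixes
`ker T` because `1 - χ(z) = z⁻¹ (1 - χ(z)) z` there. These three properties characterise the
orthogonal projection onto `ker T`.
-/

open scoped Real
open Set Metric Function MeasureTheory

theorem ContinuousOn.ite_dist_lt {α β : Type*} [PseudoMetricSpace α] [TopologicalSpace β]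
    {f g : α → β} {s : Set α} {c : α} {r : ℝ} (hs : ∀ z ∈ s, dist z c ≠ r)
    (hf : ContinuousOn f (s ∩ closedBall c r)) (hg : ContinuousOn g (s ∩ {z | r ≤ dist z c})) :
    ContinuousOn (fun z => if dist z c < r then f z else g z) s := by
  have hdist : Continuous fun z => dist z c := continuous_id.dist continuous_const
  refine ContinuousOn.if (fun z hz => absurd (frontier_lt_subset_eq hdist continuous_const hz.2)
    (hs z hz.1)) (hf.mono (inter_subset_inter_right _ ?_)) (hg.mono (inter_subset_inter_right _ ?_))
  · exact closure_lt_subset_le hdist continuous_const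
  · simpa only [not_lt] using (closure_le_eq continuous_const hdist).subset

theorem dist_zero_ne_of_norm_le_imp_eq_zero {E : Type*} [NormedAddCommGroup E] {s : Set E}
    {r : ℝ} (hr : 0 < r) (hs : ∀ z ∈ s, ‖z‖ ≤ r → z = 0) : ∀ z ∈ s, dist z 0 ≠ r := by
  intro z hz hzr
  rw [dist_zero_right] at hzr
  rw [hs z hz hzr.le, norm_zero] at hzr
  exact hr.ne hzr

theorem circleIntegral_zero_center {E : Type*} [NormedAddCommGroup E] [NormedSpace ℂ E]
    (f : ℂ → E) (r : ℝ) :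
    ∮ w in C(0, r), f w = ∫ θ in (0 : ℝ)..(2 * π),
      (Complex.I * r * Complex.exp (θ * Complex.I)) • f (r * Complex.exp (θ * Complex.I)) := by
  simp only [circleIntegral, deriv_circleMap, circleMap, zero_add]
  congr! 3 with θ
  ring

theorem two_pi_I_inv_smul_circleIntegral_sub_inv {c z : ℂ} {R : ℝ} (hR : 0 ≤ R)
    (hz : dist z c ≠ R) :
    (2 * π * Complex.I)⁻¹ • ∮ w in C(c, R), (w - z)⁻¹ = if dist z c < R then 1 else 0 := by
  rcases hz.lt_or_gt with hlt | hgt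
  · rw [if_pos hlt, circleIntegral.integral_sub_inv_of_mem_ball hlt, smul_eq_mul,
      inv_mul_cancel₀ Complex.two_pi_I_ne_zero]
  · have hdiff : DifferentiableOn ℂ (fun w => (w - z)⁻¹) (closedBall c R) := fun w hw =>
      ((differentiableAt_id.sub_const z).inv (sub_ne_zero.2 ?_)).differentiableWithinAt
    · rw [if_neg hgt.not_gt, (hdiff.diffContOnCl_ball subset_rfl).circleIntegral_eq_zero hR,
        smul_zero]
    rintro rfl
    exact hgt.not_ge hw

section Resolvent

variable {R A : Type*} {p : A → Prop} [Field R] [StarRing R] [MetricSpace R]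
  [IsTopologicalRing R] [ContinuousStar R] [ContinuousInv₀ R] [TopologicalSpace A] [Ring A]
  [StarRing A] [Algebra R A] [ContinuousFunctionalCalculus R A p]

theorem cfc_inv_sub {w : R} {a : A} (hw : w ∉ spectrum R a) (ha : p a := by cfc_tac) :
    cfc (fun z => (w - z)⁻¹) a = Ring.inverse (algebraMap R A w - a) := by
  rw [cfc_inv (fun z => w - z) a fun z hz => sub_ne_zero.2 (ne_of_mem_of_not_mem hz hw).symm,
    cfc_sub _ _ a, cfc_const w a, cfc_id' R a]

end Resolvent

theorem cfc_intervalIntegral {𝕜 A : Type*} {p : A → Prop} [RCLike 𝕜] [NormedRing A]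
    [StarRing A] [NormedAlgebra 𝕜 A] [NormedSpace ℝ A] [CompleteSpace A]
    [ContinuousFunctionalCalculus 𝕜 A p] (f : ℝ → 𝕜 → 𝕜) (a : A) {t₀ t₁ : ℝ} (h : t₀ ≤ t₁)
    (hf : ContinuousOn (uncurry f) (Icc t₀ t₁ ×ˢ spectrum 𝕜 a)) (ha : p a := by cfc_tac) :
    cfc (fun z => ∫ t in t₀..t₁, f t z) a = ∫ t in t₀..t₁, cfc (f t) a := by
  obtain ⟨C, hC⟩ := (isCompact_Icc.prod (spectrum.isCompact a)).exists_bound_of_continuousOn hf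
  simp only [intervalIntegral.integral_of_le h]
  refine cfc_setIntegral measurableSet_Ioc f (fun _ => C) a
    (hf.mono (prod_mono Ioc_subset_Icc_self subset_rfl)) ?_ (hasFiniteIntegral_const C) ha
  exact ae_restrict_of_forall_mem measurableSet_Ioc fun t ht z hz =>
    hC (t, z) ⟨Ioc_subset_Icc_self ht, hz⟩

section CircleIntegral

variable {A : Type*} {p : A → Prop} [NormedRing A] [StarRing A] [NormedAlgebra ℂ A]
  [CompleteSpace A] [ContinuousFunctionalCalculus ℂ A p]

theorem cfc_circleIntegral (f : ℂ → ℂ → ℂ) (a : A) (c : ℂ) {R : ℝ} (hR : 0 ≤ R)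
    (hf : ContinuousOn (uncurry f) (sphere c R ×ˢ spectrum ℂ a)) (ha : p a := by cfc_tac) :
    cfc (fun z => ∮ w in C(c, R), f w z) a = ∮ w in C(c, R), cfc (f w) a := by
  have hF : ContinuousOn (uncurry fun θ z => deriv (circleMap c R) θ • f (circleMap c R θ) z)
      (Icc 0 (2 * π) ×ˢ spectrum ℂ a) := by
    have hderiv : Continuous fun q : ℝ × ℂ => deriv (circleMap c R) q.1 := by
      simp only [deriv_circleMap]
      fun_prop
    refine hderiv.continuousOn.smul (hf.comp (f := fun q : ℝ × ℂ => (circleMap c R q.1, q.2)) ?_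
      fun q hq => ⟨circleMap_mem_sphere c hR q.1, hq.2⟩)
    exact (((continuous_circleMap c R).comp continuous_fst).prodMk continuous_snd).continuousOn
  simp only [circleIntegral]
  exact (cfc_intervalIntegral _ a Real.two_pi_pos.le hF ha).trans
    (intervalIntegral.integral_congr fun θ _ =>
      cfc_smul _ _ a (hf.uncurry_left _ (circleMap_mem_sphere c hR θ)))

/-- The Riesz projection of `a` for the disc `ball c R`. -/
theorem two_pi_I_inv_smul_circleIntegral_resolvent (a : A) (c : ℂ) {R : ℝ} (hR : 0 ≤ R)
    (h : ∀ z ∈ spectrum ℂ a, dist z c ≠ R) (ha : p a := by cfc_tac) :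
    (2 * π * Complex.I)⁻¹ • ∮ w in C(c, R), Ring.inverse (algebraMap ℂ A w - a) =
      cfc (fun z => if dist z c < R then 1 else 0) a := by
  have hne : ∀ w ∈ sphere c R, ∀ z ∈ spectrum ℂ a, w - z ≠ 0 := fun w hw z hz hwz =>
    h z hz (by rwa [← sub_eq_zero.1 hwz])
  have hcont : ContinuousOn (uncurry fun w z => (2 * π * Complex.I)⁻¹ * (w - z)⁻¹)
      (sphere c R ×ˢ spectrum ℂ a) :=
    continuousOn_const.mul ((continuous_fst.sub continuous_snd).continuousOn.inv₀
      fun q hq => hne q.1 hq.1 q.2 hq.2)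
  calc (2 * π * Complex.I)⁻¹ • ∮ w in C(c, R), Ring.inverse (algebraMap ℂ A w - a)
      = ∮ w in C(c, R), cfc (fun z => (2 * π * Complex.I)⁻¹ * (w - z)⁻¹) a := by
        rw [← circleIntegral.integral_smul]
        refine circleIntegral.integral_congr hR fun w hw => ?_
        rw [cfc_const_mul _ _ a, cfc_inv_sub (fun hw' => hne w hw w hw' (sub_self w)) ha]
    _ = cfc (fun z => ∮ w in C(c, R), (2 * π * Complex.I)⁻¹ * (w - z)⁻¹) a :=
        (cfc_circleIntegral _ a c hR hcont ha).symm
    _ = cfc (fun z => if dist z c < R then 1 else 0) a := by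
        refine cfc_congr fun z hz => ?_
        rw [circleIntegral.integral_const_mul, ← smul_eq_mul,
          two_pi_I_inv_smul_circleIntegral_sub_inv hR (h z hz)]

end CircleIntegral

theorem IsSelfAdjoint.apply_mem_ker_and_sub_mem_ker_orthogonal {𝕜 E : Type*} [RCLike 𝕜]
    [NormedAddCommGroup E] [InnerProductSpace 𝕜 E] [CompleteSpace E] {P T : E →L[𝕜] E}
    (hP : IsSelfAdjoint P) (hTP : T * P = 0) (hPT : ∀ y, T y = 0 → P y = y) (x : E) :
    P x ∈ LinearMap.ker (T : E →ₗ[𝕜] E) ∧ x - P x ∈ (LinearMap.ker (T : E →ₗ[𝕜] E))ᗮ := by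
  refine ⟨congr($hTP x), fun y hy => ?_⟩
  rw [inner_sub_right, ← ContinuousLinearMap.adjoint_inner_left, hP.adjoint_eq, hPT y hy, sub_self]

theorem cfc_ite_dist_lt_apply_mem_ker_and_sub_mem_ker_orthogonal {E : Type*}
    [NormedAddCommGroup E] [InnerProductSpace ℂ E] [CompleteSpace E] (T : E →L[ℂ] E)
    [IsStarNormal T] {r : ℝ} (hr : 0 < r) (hspec : ∀ z ∈ spectrum ℂ T, ‖z‖ ≤ r → z = 0)
    (x : E) :
    cfc (fun z : ℂ => if dist z 0 < r then 1 else 0) T x ∈ LinearMap.ker (T : E →ₗ[ℂ] E) ∧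
      x - cfc (fun z : ℂ => if dist z 0 < r then 1 else 0) T x ∈
        (LinearMap.ker (T : E →ₗ[ℂ] E))ᗮ := by
  have hsphere := dist_zero_ne_of_norm_le_imp_eq_zero hr hspec
  have hball : ∀ z ∈ spectrum ℂ T, dist z 0 < r → z = 0 := fun z hz hzr =>
    hspec z hz (by simpa using hzr.le)
  set χ : ℂ → ℂ := fun z => if dist z 0 < r then 1 else 0
  set g : ℂ → ℂ := fun z => if dist z 0 < r then 0 else z⁻¹
  have hχ : ContinuousOn χ (spectrum ℂ T) :=
    ContinuousOn.ite_dist_lt hsphere continuousOn_const continuousOn_const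
  have hg : ContinuousOn g (spectrum ℂ T) := by
    refine ContinuousOn.ite_dist_lt hsphere continuousOn_const (continuousOn_inv₀.mono ?_)
    rintro z ⟨-, hz⟩ rfl
    simp only [mem_ofPred_eq, dist_self] at hz
    exact hz.not_gt hr
  have hχ_mul : ∀ z ∈ spectrum ℂ T, z * χ z = 0 := fun z hz => by
    by_cases h : dist z 0 < r
    · rw [hball z hz h, zero_mul]
    · simp only [χ, h, if_false, mul_zero]
  have hχ_eq : ∀ z ∈ spectrum ℂ T, χ z = 1 - g z * z := fun z hz => by
    by_cases h : dist z 0 < r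
    · simp only [χ, g, h, if_true, zero_mul, sub_zero]
    · have hz0 : z ≠ 0 := fun hz0 => h (by simpa [hz0] using hr)
      simp only [χ, g, h, if_false, inv_mul_cancel₀ hz0, sub_self]
  refine IsSelfAdjoint.apply_mem_ker_and_sub_mem_ker_orthogonal ?_ ?_ (fun y hy => ?_) x
  · simp [isSelfAdjoint_iff, ← cfc_star, χ, apply_ite]
  · calc T * cfc χ T = cfc (fun z => z * χ z) T := by rw [cfc_mul (fun z => z) χ T, cfc_id' ℂ T]
      _ = cfc (0 : ℂ → ℂ) T := cfc_congr hχ_mul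
      _ = 0 := cfc_zero ℂ T
  · have hχ_factor : cfc χ T = 1 - cfc g T * T := by
      rw [cfc_congr hχ_eq, cfc_sub (fun _ => 1) _ T, cfc_const_one ℂ T, cfc_mul g _ T, cfc_id' ℂ T]
    simp [hχ_factor, hy]

theorem riesz_projection_eq_orthogonal_projection_ker_general
    (H : Type*) [NormedAddCommGroup H] [InnerProductSpace ℂ H] [CompleteSpace H]
    (T : H →L[ℂ] H) (hT : IsSelfAdjoint T)
    (r : ℝ) (hr : 0 < r)
    (hspec : ∀ z ∈ spectrum ℂ T, ‖z‖ ≤ r → z = 0)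
    (B : H →L[ℂ] H)
    (hB : B = (2 * (π : ℂ) * Complex.I)⁻¹ •
      ∫ θ in (0:ℝ)..(2 * π),
        (Complex.I * (r : ℂ) * Complex.exp ((θ : ℂ) * Complex.I)) •
          Ring.inverse
            (algebraMap ℂ (H →L[ℂ] H) ((r : ℂ) * Complex.exp ((θ : ℂ) * Complex.I)) - T)) :
    ∀ x : H, B x ∈ LinearMap.ker (T : H →ₗ[ℂ] H) ∧ x - B x ∈ (LinearMap.ker (T : H →ₗ[ℂ] H))ᗮ := by
  have : IsStarNormal T := hT.isStarNormal
  have hB_cfc : B = cfc (fun z : ℂ => if dist z 0 < r then 1 else 0) T := by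
    rw [hB, ← circleIntegral_zero_center fun w => Ring.inverse (algebraMap ℂ (H →L[ℂ] H) w - T),
      two_pi_I_inv_smul_circleIntegral_resolvent T 0 hr.le
        (dist_zero_ne_of_norm_le_imp_eq_zero hr hspec)]
  subst hB_cfc
  exact cfc_ite_dist_lt_apply_mem_ker_and_sub_mem_ker_orthogonal T hr hspec

/-- Riesz projection: for a positive bounded self-adjoint operator `T` on a complex Hilbert
space whose spectrum contains no point `z` with `0 < |z| ≤ r`, the contour integral
`(2πi)⁻¹ ∮_{|λ|=r} (λ·Id − T)⁻¹ dλ` equals the orthogonal projection onto `ker T`. -/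
theorem riesz_projection_eq_orthogonal_projection_ker
    (H : Type*) [NormedAddCommGroup H] [InnerProductSpace ℂ H] [CompleteSpace H]
    (T : H →L[ℂ] H) (hT : IsSelfAdjoint T)
    (hpos : ∀ u : H, 0 ≤ (inner ℂ (T u) u : ℂ).re)
    (r : ℝ) (hr : 0 < r)
    (hspec : ∀ z ∈ spectrum ℂ T, ‖z‖ ≤ r → z = 0)
    (B : H →L[ℂ] H)
    (hB : B = (2 * (π : ℂ) * Complex.I)⁻¹ •
      ∫ θ in (0:ℝ)..(2 * π),
        (Complex.I * (r : ℂ) * Complex.exp ((θ : ℂ) * Complex.I)) •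
          Ring.inverse
            (algebraMap ℂ (H →L[ℂ] H) ((r : ℂ) * Complex.exp ((θ : ℂ) * Complex.I)) - T)) :
    ∀ x : H, B x ∈ LinearMap.ker (T : H →ₗ[ℂ] H) ∧ x - B x ∈ (LinearMap.ker (T : H →ₗ[ℂ] H))ᗮ :=
  riesz_projection_eq_orthogonal_projection_ker_general H T hT r hr hspec B hB
end

section
/- Let E be a finite-dimensional real inner product space with dim E ≥ 1, and let T : E → E be a self-adjoint positive-definite linear map (⟨Tv, v⟩ > 0 for all v ≠ 0), which is therefore invertible. Then for every v ∈ E one has sup_{S ∈ E, S ≠ 0} ⟨v, S⟩² / ⟨T S, S⟩ = ⟨T⁻¹ v, v⟩. -/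
/-!
Cauchy–Schwarz for the positive form `(x, y) ↦ ⟪T x, y⟫` gives, with `w = T⁻¹ v`,
`⟪v, S⟫² = ⟪T w, S⟫² ≤ ⟪T w, w⟫ ⟪T S, S⟫`, and equality holds at `S = w`.
-/

open scoped InnerProductSpace

namespace LinearMap

variable {E : Type*} [NormedAddCommGroup E] [InnerProductSpace ℝ E] {T : E →ₗ[ℝ] E}

theorem IsPositive.inner_map_sq_le (hT : T.IsPositive) (x y : E) :
    ⟪T x, y⟫_ℝ ^ 2 ≤ ⟪T x, x⟫_ℝ * ⟪T y, y⟫_ℝ := by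
  have hCS := BilinForm.apply_mul_apply_le_of_forall_zero_le ((innerₗ E) ∘ₗ T)
    hT.inner_nonneg_left x y
  simp only [coe_comp, Function.comp_apply, innerₗ_apply_apply] at hCS
  rwa [hT.isSymmetric y x, real_inner_comm (T x) y, ← sq] at hCS

theorem IsPositive.iSup_inner_map_sq_div_eq (hT : T.IsPositive) (x : E) :
    ⨆ y : {y : E // y ≠ 0}, ⟪T x, y⟫_ℝ ^ 2 / ⟪T y, y⟫_ℝ = ⟪T x, x⟫_ℝ := by
  rcases eq_or_ne x 0 with rfl | hx
  · simp
  have hle (y : {y : E // y ≠ 0}) : ⟪T x, y⟫_ℝ ^ 2 / ⟪T y, y⟫_ℝ ≤ ⟪T x, x⟫_ℝ :=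
    div_le_of_le_mul₀ (hT.inner_nonneg_left y) (hT.inner_nonneg_left x)
      (hT.inner_map_sq_le x y)
  have : Nonempty {y : E // y ≠ 0} := ⟨⟨x, hx⟩⟩
  refine le_antisymm (ciSup_le hle) ?_
  calc ⟪T x, x⟫_ℝ = ⟪T x, x⟫_ℝ ^ 2 / ⟪T x, x⟫_ℝ := by rw [sq, mul_self_div_self]
    _ ≤ _ := le_ciSup ⟨_, Set.forall_mem_range.mpr hle⟩ ⟨x, hx⟩

theorem injective_of_inner_map_self_pos (hpos : ∀ x, x ≠ 0 → 0 < ⟪T x, x⟫_ℝ) :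
    Function.Injective T := by
  rw [← ker_eq_bot, ker_eq_bot']
  intro x hx
  by_contra hx0
  simpa [hx] using hpos x hx0

theorem isPositive_of_inner_map_self_pos (hsa : T.IsSymmetric)
    (hpos : ∀ x, x ≠ 0 → 0 < ⟪T x, x⟫_ℝ) : T.IsPositive := by
  refine (isPositive_iff T).2 ⟨hsa, fun x => ?_⟩
  rcases eq_or_ne x 0 with rfl | hx
  · simp
  · exact (hpos x hx).le

end LinearMap

theorem sup_inner_sq_div_eq_inner_inv_general
    (E : Type*) [NormedAddCommGroup E] [InnerProductSpace ℝ E] [FiniteDimensional ℝ E]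
    (T : E →ₗ[ℝ] E)
    (hsa : ∀ u w : E, (inner ℝ (T u) w : ℝ) = inner ℝ u (T w))
    (hpos : ∀ v : E, v ≠ 0 → 0 < (inner ℝ (T v) v : ℝ)) :
    ∃ Tinv : E →ₗ[ℝ] E, Tinv ∘ₗ T = LinearMap.id ∧ T ∘ₗ Tinv = LinearMap.id ∧
      ∀ v : E,
        (⨆ S : {S : E // S ≠ 0}, (inner ℝ v (S : E) : ℝ) ^ 2 / (inner ℝ (T (S : E)) (S : E) : ℝ))
          = inner ℝ (Tinv v) v := by
  have hT : T.IsPositive := LinearMap.isPositive_of_inner_map_self_pos hsa hpos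
  let e := LinearEquiv.ofInjectiveEndo T (LinearMap.injective_of_inner_map_self_pos hpos)
  refine ⟨e.symm, LinearMap.ext e.symm_apply_apply, LinearMap.ext e.apply_symm_apply,
    fun v => ?_⟩
  have hv : T (e.symm v) = v := e.apply_symm_apply v
  simpa [hv, real_inner_comm] using hT.iSup_inner_map_sq_div_eq (e.symm v)

/-- For a self-adjoint positive-definite linear map `T` on a finite-dimensional real inner
product space (which is therefore invertible), one has
`sup_{S ≠ 0} ⟨v,S⟩² / ⟨TS,S⟩ = ⟨T⁻¹ v, v⟩` for every `v`. -/
theorem sup_inner_sq_div_eq_inner_inv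
    (E : Type*) [NormedAddCommGroup E] [InnerProductSpace ℝ E] [FiniteDimensional ℝ E]
    (hdim : 1 ≤ Module.finrank ℝ E)
    (T : E →ₗ[ℝ] E)
    (hsa : ∀ u w : E, (inner ℝ (T u) w : ℝ) = inner ℝ u (T w))
    (hpos : ∀ v : E, v ≠ 0 → 0 < (inner ℝ (T v) v : ℝ)) :
    ∃ Tinv : E →ₗ[ℝ] E, Tinv ∘ₗ T = LinearMap.id ∧ T ∘ₗ Tinv = LinearMap.id ∧
      ∀ v : E,
        (⨆ S : {S : E // S ≠ 0}, (inner ℝ v (S : E) : ℝ) ^ 2 / (inner ℝ (T (S : E)) (S : E) : ℝ))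
          = inner ℝ (Tinv v) v :=
  sup_inner_sq_div_eq_inner_inv_general E T hsa hpos
end
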